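/- Let n ≥ 4 be an integer, x := (1, 1/√2, …, 1/√n)ᵗ, and A := x·xᵗ (so A has entries 1/√(ij)). Then ‖A‖_Δ < (2/√(log h(A)))·‖A‖ and ‖A‖_P < (4/log h(A))·‖A‖. -/

import Mathlib

open scoped BigOperators

/-- Euclidean norm of a finitely-indexed complex vector. -/
noncomputable def en {ι : Type*} [Fintype ι] (v : ι → ℂ) : ℝ :=
  Real.sqrt (∑ i, ‖v i‖ ^ 2)

/-- The L¹ norm of a vector. -/
noncomputable def vn1 {ι : Type*} [Fintype ι] (v : ι → ℂ) : ℝ := ∑ i, ‖v i‖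

/-- The L^∞ norm of a vector. -/
noncomputable def vnInf {ι : Type*} [Fintype ι] (v : ι → ℂ) : ℝ := ⨆ i, ‖v i‖

/-- The induced L²-operator norm of a matrix. -/
noncomputable def opNorm2 {ι κ : Type*} [Fintype ι] [Fintype κ]
    (A : Matrix ι κ ℂ) : ℝ :=
  sInf {C | 0 ≤ C ∧ ∀ x : κ → ℂ, en (A.mulVec x) ≤ C * en x}

/-- The induced L¹-operator norm of a matrix. -/
noncomputable def opNorm1 {ι κ : Type*} [Fintype ι] [Fintype κ]
    (A : Matrix ι κ ℂ) : ℝ :=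
  sInf {C | 0 ≤ C ∧ ∀ x : κ → ℂ, vn1 (A.mulVec x) ≤ C * vn1 x}

/-- The induced L^∞-operator norm of a matrix. -/
noncomputable def opNormInf {ι κ : Type*} [Fintype ι] [Fintype κ]
    (A : Matrix ι κ ℂ) : ℝ :=
  sInf {C | 0 ≤ C ∧ ∀ x : κ → ℂ, vnInf (A.mulVec x) ≤ C * vnInf x}

/-- The height of a matrix: √(‖A‖₁‖A‖_∞)/‖A‖. -/
noncomputable def height {ι κ : Type*} [Fintype ι] [Fintype κ]
    (A : Matrix ι κ ℂ) : ℝ :=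
  Real.sqrt (opNorm1 A * opNormInf A) / opNorm2 A

/-- The discrete norm: max of ‖Aξ‖/‖ξ‖ over non-zero binary vectors ξ. -/
noncomputable def dnorm {ι κ : Type*} [Fintype ι] [Fintype κ]
    (A : Matrix ι κ ℂ) : ℝ :=
  sSup {r | ∃ ξ : κ → ℂ, (∀ i, ξ i = 0 ∨ ξ i = 1) ∧ ξ ≠ 0 ∧
    r = en (A.mulVec ξ) / en ξ}

/-- The discrete Rayleigh norm: max of |ξᵗAη|/(‖ξ‖‖η‖) over non-zero binary
vectors ξ, η. -/
noncomputable def pnorm {ι κ : Type*} [Fintype ι] [Fintype κ]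
    (A : Matrix ι κ ℂ) : ℝ :=
  sSup {r | ∃ (ξ : ι → ℂ) (η : κ → ℂ),
    (∀ i, ξ i = 0 ∨ ξ i = 1) ∧ ξ ≠ 0 ∧
    (∀ j, η j = 0 ∨ η j = 1) ∧ η ≠ 0 ∧
    r = ‖∑ i, ∑ j, ξ i * A i j * η j‖ / (en ξ * en η)}

/-! `A = x xᵀ` has rank one, so all its norms are read off from `x`: `‖A‖ = ‖x‖₂² = H_n`
and `‖A‖₁ = ‖A‖_∞ = ‖x‖₁ ‖x‖_∞ = ∑ 1/√i`, hence `h(A) = (∑ 1/√i) / H_n`. For a `0/1`-vector `ξ`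
with `k` ones, `|⟨x, ξ⟩|` is at most the sum of the `k` largest entries of `x`, which is at most
`2√k = 2‖ξ‖`; so `‖A‖_Δ ≤ 2√H_n` and `‖A‖_P ≤ 4`. Both claims then reduce to `log h(A) < H_n`,
which holds because `∑ 1/√i ≤ 2√n < n + 1` while `log (n + 1) ≤ H_n` and `H_n ≥ 1`. -/

open Matrix Finset

theorem sInf_bound_constants_eq {α : Type*} {f g : α → ℝ} {C₀ : ℝ} (hC₀ : 0 ≤ C₀)
    (hbound : ∀ x, f x ≤ C₀ * g x) {x₀ : α} (hx₀ : 0 < g x₀) (hsharp : C₀ * g x₀ ≤ f x₀) :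
    sInf {C | 0 ≤ C ∧ ∀ x, f x ≤ C * g x} = C₀ :=
  IsLeast.csInf_eq ⟨⟨hC₀, hbound⟩, fun _ hC => le_of_mul_le_mul_right (hsharp.trans (hC.2 x₀)) hx₀⟩

section VectorNorms

variable {ι : Type*} [Fintype ι]

theorem en_nonneg (v : ι → ℂ) : 0 ≤ en v := Real.sqrt_nonneg _

theorem en_sq (v : ι → ℂ) : en v ^ 2 = ∑ i, ‖v i‖ ^ 2 :=
  Real.sq_sqrt (sum_nonneg fun _ _ => by positivity)

theorem en_pos {v : ι → ℂ} (hv : v ≠ 0) : 0 < en v := by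
  obtain ⟨i, hi⟩ := Function.ne_iff.mp hv
  exact Real.sqrt_pos.mpr (sum_pos' (fun _ _ => by positivity) ⟨i, mem_univ i, by positivity⟩)

theorem en_smul (c : ℂ) (v : ι → ℂ) : en (c • v) = ‖c‖ * en v := by
  simp only [en, Pi.smul_apply, smul_eq_mul, norm_mul, mul_pow, ← mul_sum]
  rw [Real.sqrt_mul (by positivity), Real.sqrt_sq (norm_nonneg c)]

theorem en_star (v : ι → ℂ) : en (star v) = en v := by
  simp [en]

theorem vn1_smul (c : ℂ) (v : ι → ℂ) : vn1 (c • v) = ‖c‖ * vn1 v := by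
  simp only [vn1, Pi.smul_apply, smul_eq_mul, norm_mul, mul_sum]

theorem vn1_nonneg (v : ι → ℂ) : 0 ≤ vn1 v :=
  sum_nonneg fun _ _ => norm_nonneg _

theorem norm_le_vnInf (v : ι → ℂ) (i : ι) : ‖v i‖ ≤ vnInf v :=
  le_ciSup (f := fun i => ‖v i‖) (Set.finite_range _).bddAbove i

theorem vnInf_nonneg (v : ι → ℂ) : 0 ≤ vnInf v :=
  Real.iSup_nonneg fun _ => norm_nonneg _

theorem vnInf_smul (c : ℂ) (v : ι → ℂ) : vnInf (c • v) = ‖c‖ * vnInf v := by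
  simp only [vnInf, Pi.smul_apply, smul_eq_mul, norm_mul]
  exact (Real.mul_iSup_of_nonneg (norm_nonneg c) _).symm

theorem norm_dotProduct_le_en_mul_en (y v : ι → ℂ) : ‖y ⬝ᵥ v‖ ≤ en y * en v := by
  calc ‖y ⬝ᵥ v‖ ≤ ∑ i, ‖y i‖ * ‖v i‖ := by
        simpa only [dotProduct, norm_mul] using norm_sum_le univ fun i => y i * v i
    _ ≤ en y * en v := Real.sum_mul_le_sqrt_mul_sqrt _ _ _

theorem norm_dotProduct_le_vnInf_mul_vn1 (y v : ι → ℂ) : ‖y ⬝ᵥ v‖ ≤ vnInf y * vn1 v := by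
  calc ‖y ⬝ᵥ v‖ ≤ ∑ i, ‖y i‖ * ‖v i‖ := by
        simpa only [dotProduct, norm_mul] using norm_sum_le univ fun i => y i * v i
    _ ≤ ∑ i, vnInf y * ‖v i‖ := by gcongr with i; exact norm_le_vnInf y i
    _ = vnInf y * vn1 v := by rw [vn1, mul_sum]

theorem norm_dotProduct_le_vn1_mul_vnInf (y v : ι → ℂ) : ‖y ⬝ᵥ v‖ ≤ vn1 y * vnInf v := by
  rw [dotProduct_comm, mul_comm]
  exact norm_dotProduct_le_vnInf_mul_vn1 v y

end VectorNorms

section RankOne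

theorem vecMulVec_mulVec_eq_smul {ι κ : Type*} [Fintype κ] (x : ι → ℂ) (y v : κ → ℂ) :
    vecMulVec x y *ᵥ v = (y ⬝ᵥ v) • x := by
  rw [vecMulVec_mulVec, op_smul_eq_smul]

variable {ι κ : Type*} [Fintype ι] [Fintype κ] (x : ι → ℂ) {y : κ → ℂ}

theorem opNorm2_vecMulVec (hy : y ≠ 0) : opNorm2 (vecMulVec x y) = en x * en y := by
  refine sInf_bound_constants_eq (by positivity [en_nonneg x, en_nonneg y]) (fun v => ?_)
    (en_pos (star_ne_zero.mpr hy)) ?_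
  · rw [vecMulVec_mulVec_eq_smul, en_smul, mul_comm, mul_assoc]
    gcongr
    · exact en_nonneg x
    · exact norm_dotProduct_le_en_mul_en y v
  · have hyy : y ⬝ᵥ star y = ((en y ^ 2 : ℝ) : ℂ) := by
      simp [dotProduct, en_sq, Complex.mul_conj']
    rw [vecMulVec_mulVec_eq_smul, en_smul, en_star, hyy, Complex.norm_real,
      Real.norm_of_nonneg (by positivity)]
    exact le_of_eq (by ring)

theorem opNorm1_vecMulVec (hy : y ≠ 0) : opNorm1 (vecMulVec x y) = vn1 x * vnInf y := by
  obtain ⟨j, hj⟩ : ∃ j, ‖y j‖ = vnInf y := by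
    have : Nonempty κ := ⟨(Function.ne_iff.mp hy).choose⟩
    exact exists_eq_ciSup_of_finite
  classical
  have hsingle : vn1 (Pi.single j 1 : κ → ℂ) = 1 := by
    simp [vn1, Pi.single_apply, apply_ite]
  refine sInf_bound_constants_eq (mul_nonneg (vn1_nonneg x) (vnInf_nonneg y)) (fun v => ?_)
    (hsingle.symm ▸ one_pos) ?_
  · rw [vecMulVec_mulVec_eq_smul, vn1_smul, mul_comm, mul_assoc]
    exact mul_le_mul_of_nonneg_left (norm_dotProduct_le_vnInf_mul_vn1 y v) (vn1_nonneg x)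
  · rw [vecMulVec_mulVec_eq_smul, vn1_smul, hsingle, dotProduct_single, mul_one, mul_one, hj,
      mul_comm]

theorem opNormInf_vecMulVec (hy : y ≠ 0) : opNormInf (vecMulVec x y) = vnInf x * vn1 y := by
  set u : κ → ℂ := fun j => star (y j) / ‖y j‖
  have hyu : y ⬝ᵥ u = (vn1 y : ℂ) := by
    simp only [dotProduct, u, vn1, Complex.ofReal_sum, RCLike.star_def]
    refine sum_congr rfl fun j _ => ?_
    rcases eq_or_ne (y j) 0 with h | h
    · simp [h]
    · rw [mul_div_assoc', Complex.mul_conj', sq,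
        mul_div_cancel_right₀ _ (by exact_mod_cast norm_ne_zero_iff.mpr h)]
  have hu : vnInf u = 1 := by
    obtain ⟨j, hj⟩ := Function.ne_iff.mp hy
    have hnorm : ∀ j, y j ≠ 0 → ‖u j‖ = 1 := fun j h => by
      simp [u, h]
    have : Nonempty κ := ⟨j⟩
    refine le_antisymm (ciSup_le fun i => ?_) (hnorm j hj ▸ norm_le_vnInf u j)
    rcases eq_or_ne (y i) 0 with h | h
    · simp [u, h]
    · exact (hnorm i h).le
  refine sInf_bound_constants_eq (mul_nonneg (vnInf_nonneg x) (vn1_nonneg y)) (fun v => ?_)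
    (hu.symm ▸ one_pos) ?_
  · rw [vecMulVec_mulVec_eq_smul, vnInf_smul, mul_comm, mul_assoc]
    exact mul_le_mul_of_nonneg_left (norm_dotProduct_le_vn1_mul_vnInf y v) (vnInf_nonneg x)
  · rw [vecMulVec_mulVec_eq_smul, vnInf_smul, hu, hyu, Complex.norm_real,
      Real.norm_of_nonneg (vn1_nonneg y), mul_one, mul_comm]

end RankOne

section Binary

variable {ι κ : Type*} [Fintype ι] [Fintype κ]

open scoped Classical in
theorem en_of_binary {ξ : ι → ℂ} (hξ : ∀ i, ξ i = 0 ∨ ξ i = 1) :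
    en ξ = √(#{i | ξ i = 1} : ℝ) := by
  rw [en, card_eq_sum_ones, Nat.cast_sum, sum_filter]
  congr 1
  refine sum_congr rfl fun i _ => ?_
  rcases hξ i with h | h <;> simp [h]

open scoped Classical in
theorem dotProduct_binary {ξ : ι → ℂ} (hξ : ∀ i, ξ i = 0 ∨ ξ i = 1) (v : ι → ℂ) :
    v ⬝ᵥ ξ = ∑ i with ξ i = 1, v i := by
  rw [dotProduct, sum_filter]
  refine sum_congr rfl fun i _ => ?_
  rcases hξ i with h | h <;> simp [h]

theorem dnorm_vecMulVec_le (x : ι → ℂ) {y : κ → ℂ} {c : ℝ} (hc : 0 ≤ c)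
    (hy : ∀ ξ : κ → ℂ, (∀ j, ξ j = 0 ∨ ξ j = 1) → ‖y ⬝ᵥ ξ‖ ≤ c * en ξ) :
    dnorm (vecMulVec x y) ≤ en x * c := by
  refine Real.sSup_le ?_ (mul_nonneg (en_nonneg x) hc)
  rintro r ⟨ξ, hξ, -, rfl⟩
  rw [vecMulVec_mulVec_eq_smul, en_smul]
  refine div_le_of_le_mul₀ (en_nonneg ξ) (mul_nonneg (en_nonneg x) hc) ?_
  calc ‖y ⬝ᵥ ξ‖ * en x ≤ c * en ξ * en x := by gcongr; exacts [en_nonneg x, hy ξ hξ]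
    _ = en x * c * en ξ := by ring

theorem pnorm_vecMulVec_le {x : ι → ℂ} {y : κ → ℂ} {c d : ℝ} (hc : 0 ≤ c) (hd : 0 ≤ d)
    (hx : ∀ ξ : ι → ℂ, (∀ i, ξ i = 0 ∨ ξ i = 1) → ‖x ⬝ᵥ ξ‖ ≤ c * en ξ)
    (hy : ∀ η : κ → ℂ, (∀ j, η j = 0 ∨ η j = 1) → ‖y ⬝ᵥ η‖ ≤ d * en η) :
    pnorm (vecMulVec x y) ≤ c * d := by
  refine Real.sSup_le ?_ (mul_nonneg hc hd)
  rintro r ⟨ξ, η, hξ, -, hη, -, rfl⟩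
  have hsplit : ∑ i, ∑ j, ξ i * vecMulVec x y i j * η j = (x ⬝ᵥ ξ) * (y ⬝ᵥ η) := by
    simp only [dotProduct, sum_mul_sum, vecMulVec_apply]
    exact sum_congr rfl fun i _ => sum_congr rfl fun j _ => by ring
  rw [hsplit, norm_mul]
  refine div_le_of_le_mul₀ (mul_nonneg (en_nonneg ξ) (en_nonneg η)) (mul_nonneg hc hd) ?_
  calc ‖x ⬝ᵥ ξ‖ * ‖y ⬝ᵥ η‖ ≤ (c * en ξ) * (d * en η) :=
        mul_le_mul (hx ξ hξ) (hy η hη) (norm_nonneg _) (mul_nonneg hc (en_nonneg ξ))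
    _ = c * d * (en ξ * en η) := by ring

end Binary

section InvSqrtSums

theorem two_sqrt_add_one_div_sqrt_succ_le {k : ℝ} (hk : 0 ≤ k) :
    2 * √k + 1 / √(k + 1) ≤ 2 * √(k + 1) := by
  have hb : 0 < √(k + 1) := Real.sqrt_pos.mpr (by linarith)
  have ha2 := Real.sq_sqrt hk
  have hb2 := Real.sq_sqrt (by linarith : 0 ≤ k + 1)
  rw [← sub_nonneg, show 2 * √(k + 1) - (2 * √k + 1 / √(k + 1))
    = (2 * √(k + 1) ^ 2 - 2 * √k * √(k + 1) - 1) / √(k + 1) by field_simp; ring]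
  exact div_nonneg (by nlinarith [sq_nonneg (√k - √(k + 1))]) hb.le

theorem sum_one_div_sqrt_succ_le (F : Finset ℕ) : ∑ i ∈ F, 1 / √(i + 1 : ℝ) ≤ 2 * √(#F : ℝ) := by
  induction F using Finset.induction_on_max with
  | empty => simp
  | insert a s hlt ih =>
    have ha : a ∉ s := fun h => lt_irrefl a (hlt a h)
    have hcard : #s ≤ a := by simpa using card_le_card fun x hx => mem_range.mpr (hlt x hx)
    have hweight : 1 / √(a + 1 : ℝ) ≤ 1 / √(#s + 1 : ℝ) := by gcongr
    rw [sum_insert ha, card_insert_of_notMem ha, Nat.cast_succ]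
    linarith [two_sqrt_add_one_div_sqrt_succ_le (Nat.cast_nonneg (α := ℝ) #s)]

theorem harmonic_eq_sum_one_div_succ (n : ℕ) :
    (harmonic n : ℝ) = ∑ i ∈ range n, 1 / (i + 1 : ℝ) := by
  simp [harmonic]

theorem one_le_harmonic {n : ℕ} (hn : n ≠ 0) : (1 : ℝ) ≤ harmonic n := by
  rw [harmonic_eq_sum_one_div_succ]
  refine (by norm_num : (1 : ℝ) = 1 / ((0 : ℕ) + 1)).trans_le ?_
  exact single_le_sum (f := fun i : ℕ => 1 / (i + 1 : ℝ)) (fun i _ => by positivity)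
    (mem_range.mpr (Nat.pos_of_ne_zero hn))

theorem harmonic_lt_sum_one_div_sqrt_succ {n : ℕ} (hn : 2 ≤ n) :
    (harmonic n : ℝ) < ∑ i ∈ range n, 1 / √(i + 1 : ℝ) := by
  rw [harmonic_eq_sum_one_div_succ]
  refine sum_lt_sum (fun i _ => ?_) ⟨1, mem_range.mpr hn, ?_⟩
  · gcongr
    exact Real.sqrt_le_self_iff.mpr (Or.inr (by simp))
  · have hsqrt2 : √(2 : ℝ) < 2 := (Real.sqrt_lt' two_pos).mpr (by norm_num)
    norm_num
    simpa using inv_strictAnti₀ (by positivity) hsqrt2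

theorem log_sum_one_div_sqrt_succ_lt_harmonic {n : ℕ} (hn : 2 ≤ n) :
    Real.log (∑ i ∈ range n, 1 / √(i + 1 : ℝ)) < harmonic n := by
  have hT := sum_one_div_sqrt_succ_le (range n)
  rw [card_range] at hT
  have hsqrt : 2 * √(n : ℝ) < n + 1 := by
    have h1 : (1 : ℝ) < √n := Real.lt_sqrt_of_sq_lt (by norm_cast)
    nlinarith [Real.sq_sqrt (Nat.cast_nonneg (α := ℝ) n)]
  calc Real.log (∑ i ∈ range n, 1 / √(i + 1 : ℝ)) < Real.log (n + 1) :=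
        Real.log_lt_log (sum_pos (fun i _ => by positivity) (nonempty_range_iff.mpr (by omega)))
          (hT.trans_lt hsqrt)
    _ ≤ harmonic n := by simpa using log_add_one_le_harmonic n

theorem log_sum_one_div_sqrt_succ_div_harmonic_mem_Ioo {n : ℕ} (hn : 2 ≤ n) :
    Real.log ((∑ i ∈ range n, 1 / √(i + 1 : ℝ)) / harmonic n) ∈ Set.Ioo 0 (harmonic n : ℝ) := by
  have hH := one_le_harmonic (n := n) (by omega)
  have hHT := harmonic_lt_sum_one_div_sqrt_succ hn
  constructor
  · exact Real.log_pos ((one_lt_div (by linarith)).mpr hHT)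
  · rw [Real.log_div (by linarith) (by linarith)]
    linarith [Real.log_nonneg hH, log_sum_one_div_sqrt_succ_lt_harmonic hn]

end InvSqrtSums

section InvSqrtSucc

noncomputable def invSqrtSucc (n : ℕ) : Fin n → ℂ := fun i => ((1 / √((i : ℕ) + 1) : ℝ) : ℂ)

variable {n : ℕ}

theorem norm_invSqrtSucc_apply (i : Fin n) : ‖invSqrtSucc n i‖ = 1 / √((i : ℕ) + 1) := by
  rw [invSqrtSucc, Complex.norm_real, Real.norm_of_nonneg (by positivity)]

theorem vecMulVec_invSqrtSucc_apply (i j : Fin n) :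
    vecMulVec (invSqrtSucc n) (invSqrtSucc n) i j =
      ((1 / √(((i : ℕ) + 1) * ((j : ℕ) + 1)) : ℝ) : ℂ) := by
  rw [vecMulVec_apply, invSqrtSucc, invSqrtSucc, ← Complex.ofReal_mul,
    Real.sqrt_mul (by positivity), one_div_mul_one_div]

theorem en_invSqrtSucc : en (invSqrtSucc n) = √(harmonic n) := by
  rw [en, harmonic_eq_sum_one_div_succ, ← Fin.sum_univ_eq_sum_range (fun i => 1 / (i + 1 : ℝ))]
  congr 1
  refine sum_congr rfl fun i _ => ?_
  rw [norm_invSqrtSucc_apply, div_pow, Real.sq_sqrt (by positivity), one_pow]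

theorem vn1_invSqrtSucc : vn1 (invSqrtSucc n) = ∑ i ∈ range n, 1 / √(i + 1 : ℝ) := by
  rw [vn1, ← Fin.sum_univ_eq_sum_range (fun i => 1 / √(i + 1 : ℝ))]
  exact sum_congr rfl fun i _ => norm_invSqrtSucc_apply i

theorem vnInf_invSqrtSucc (hn : n ≠ 0) : vnInf (invSqrtSucc n) = 1 := by
  have h0 : ‖invSqrtSucc n ⟨0, Nat.pos_of_ne_zero hn⟩‖ = 1 := by
    simp [norm_invSqrtSucc_apply]
  have : NeZero n := ⟨hn⟩
  refine le_antisymm (ciSup_le fun i => ?_) (h0 ▸ norm_le_vnInf _ _)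
  rw [norm_invSqrtSucc_apply, div_le_one (by positivity)]
  exact Real.one_le_sqrt.mpr (by simp)

theorem invSqrtSucc_ne_zero (hn : n ≠ 0) : invSqrtSucc n ≠ 0 := by
  intro h
  simpa [invSqrtSucc] using congrFun h ⟨0, Nat.pos_of_ne_zero hn⟩

open scoped Classical in
theorem norm_invSqrtSucc_dotProduct_binary_le {ξ : Fin n → ℂ} (hξ : ∀ i, ξ i = 0 ∨ ξ i = 1) :
    ‖invSqrtSucc n ⬝ᵥ ξ‖ ≤ 2 * en ξ := by
  set F : Finset (Fin n) := {i | ξ i = 1}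
  calc ‖invSqrtSucc n ⬝ᵥ ξ‖ ≤ ∑ i ∈ F, 1 / √((i : ℕ) + 1 : ℝ) := by
        rw [dotProduct_binary hξ]
        exact (norm_sum_le _ _).trans_eq (sum_congr rfl fun i _ => norm_invSqrtSucc_apply i)
    _ = ∑ i ∈ F.map Fin.valEmbedding, 1 / √(i + 1 : ℝ) := by rw [sum_map]; rfl
    _ ≤ 2 * en ξ := by
        rw [en_of_binary hξ, ← card_map Fin.valEmbedding]
        exact sum_one_div_sqrt_succ_le _

theorem opNorm2_vecMulVec_invSqrtSucc (hn : n ≠ 0) :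
    opNorm2 (vecMulVec (invSqrtSucc n) (invSqrtSucc n)) = harmonic n := by
  rw [opNorm2_vecMulVec _ (invSqrtSucc_ne_zero hn), en_invSqrtSucc,
    Real.mul_self_sqrt (zero_le_one.trans (one_le_harmonic hn))]

theorem height_vecMulVec_invSqrtSucc (hn : n ≠ 0) :
    height (vecMulVec (invSqrtSucc n) (invSqrtSucc n)) =
      (∑ i ∈ range n, 1 / √(i + 1 : ℝ)) / harmonic n := by
  have hx := invSqrtSucc_ne_zero hn
  rw [height, opNorm2_vecMulVec_invSqrtSucc hn, opNorm1_vecMulVec _ hx, opNormInf_vecMulVec _ hx,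
    vn1_invSqrtSucc, vnInf_invSqrtSucc hn, mul_one, one_mul,
    Real.sqrt_mul_self (sum_nonneg fun _ _ => by positivity)]

theorem dnorm_vecMulVec_invSqrtSucc_le :
    dnorm (vecMulVec (invSqrtSucc n) (invSqrtSucc n)) ≤ 2 * √(harmonic n) := by
  rw [mul_comm, ← en_invSqrtSucc]
  exact dnorm_vecMulVec_le _ zero_le_two fun _ => norm_invSqrtSucc_dotProduct_binary_le

theorem pnorm_vecMulVec_invSqrtSucc_le :
    pnorm (vecMulVec (invSqrtSucc n) (invSqrtSucc n)) ≤ 2 * 2 :=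
  pnorm_vecMulVec_le zero_le_two zero_le_two (fun _ => norm_invSqrtSucc_dotProduct_binary_le)
    fun _ => norm_invSqrtSucc_dotProduct_binary_le

end InvSqrtSucc

theorem two_mul_sqrt_lt_two_div_sqrt_mul {L S : ℝ} (hL : 0 < L) (hLS : L < S) :
    2 * √S < 2 / √L * S := by
  rw [div_mul_eq_mul_div, lt_div_iff₀ (Real.sqrt_pos.mpr hL)]
  nlinarith [Real.sqrt_lt_sqrt hL.le hLS, Real.mul_self_sqrt (hL.trans hLS).le,
    Real.sqrt_pos.mpr (hL.trans hLS)]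

theorem stmt16 {n : ℕ} (hn : 4 ≤ n)
    (A : Matrix (Fin n) (Fin n) ℂ)
    (hA : ∀ i j, A i j =
      ((1 / Real.sqrt (((i : ℕ) + 1) * ((j : ℕ) + 1)) : ℝ) : ℂ)) :
    dnorm A < 2 / Real.sqrt (Real.log (height A)) * opNorm2 A ∧
      pnorm A < 4 / Real.log (height A) * opNorm2 A := by
  obtain rfl : A = vecMulVec (invSqrtSucc n) (invSqrtSucc n) :=
    Matrix.ext fun i j => (hA i j).trans (vecMulVec_invSqrtSucc_apply i j).symm
  obtain ⟨hlog_pos, hlog_lt⟩ := log_sum_one_div_sqrt_succ_div_harmonic_mem_Ioo (n := n) (by omega)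
  rw [height_vecMulVec_invSqrtSucc (by omega), opNorm2_vecMulVec_invSqrtSucc (by omega)]
  refine ⟨dnorm_vecMulVec_invSqrtSucc_le.trans_lt
    (two_mul_sqrt_lt_two_div_sqrt_mul hlog_pos hlog_lt), pnorm_vecMulVec_invSqrtSucc_le.trans_lt ?_⟩
  rw [div_mul_eq_mul_div, lt_div_iff₀ hlog_pos]
  linarith
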